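/- (Theorem 5.1, the Adler-Shiota-van Moerbeke formula, case ν = μ = 2, in tau-function form.) Suppose τ₁, τ₂ : (ℕ → ℂ) × (ℕ → ℂ) → ℂ are continuous and (τ₁, τ₂) satisfies the KP-mKP Fay identity. Then for all x, y : ℕ → ℂ and all pairwise distinct nonzero γ, ζ, z ∈ ℂ: ((z − ζ)/(z − γ)) · τ₂(x, y + [γ⁻¹] − [ζ⁻¹] − [z⁻¹]) · τ₁(x, y) − (ζ/γ) · τ₂(x, y − [z⁻¹]) · τ₁(x, y + [γ⁻¹] − [ζ⁻¹]) = ((γ − ζ)/γ) · (z/(z − γ)) · τ₂(x, y − [ζ⁻¹]) · τ₁(x, y + [γ⁻¹] − [z⁻¹]). (This is the identity X₂(γ,ζ) ⋆ w₂(z) = ((γ−ζ)/γ) Y₂₂(γ,ζ) w₂(z) of the paper, written out for the tau functions with the exponential factors cancelled and multiplied through by τ₁².) -/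

import Mathlib

/-- The shift `[s] : ℕ → ℂ`, `[s](k) = s^(k+1)/(k+1)`, representing the
sequence `(s, s²/2, s³/3, …)` of time variables. -/
noncomputable def sh (s : ℂ) : ℕ → ℂ := fun k => s ^ (k + 1) / ((k : ℂ) + 1)

/-- The KP-mKP Fay identity (equation (3.1) of the paper) for a pair of tau
functions `(τ₁, τ₂)`. -/
def KPmKPFay (τ₁ τ₂ : (ℕ → ℂ) × (ℕ → ℂ) → ℂ) : Prop :=
  ∀ x y : ℕ → ℂ, ∀ s0 s1 s2 s3 t0 t1 t2 t3 : ℂ,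
    s0 ≠ 0 → s1 ≠ 0 → s2 ≠ 0 → s3 ≠ 0 →
    s0 ≠ s1 → s0 ≠ s2 → s0 ≠ s3 → s1 ≠ s2 → s1 ≠ s3 → s2 ≠ s3 →
    t0 ≠ 0 → t1 ≠ 0 → t2 ≠ 0 → t3 ≠ 0 →
    t0 ≠ t1 → t0 ≠ t2 → t0 ≠ t3 → t1 ≠ t2 → t1 ≠ t3 → t2 ≠ t3 →
    (s1 * (s1 - s0) / ((s1 - s2) * (s1 - s3)))
        * τ₁ (x + sh s2 + sh s3, y + sh t1 + sh t2 + sh t3)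
        * τ₂ (x + sh s0 + sh s1, y + sh t0)
      + (s2 * (s2 - s0) / ((s2 - s3) * (s2 - s1)))
        * τ₁ (x + sh s3 + sh s1, y + sh t1 + sh t2 + sh t3)
        * τ₂ (x + sh s0 + sh s2, y + sh t0)
      + (s3 * (s3 - s0) / ((s3 - s1) * (s3 - s2)))
        * τ₁ (x + sh s1 + sh s2, y + sh t1 + sh t2 + sh t3)
        * τ₂ (x + sh s0 + sh s3, y + sh t0)
    = (t1 * (t1 - t0) / ((t1 - t2) * (t1 - t3)))
        * τ₂ (x + sh s1 + sh s2 + sh s3, y + sh t2 + sh t3)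
        * τ₁ (x + sh s0, y + sh t0 + sh t1)
      + (t2 * (t2 - t0) / ((t2 - t3) * (t2 - t1)))
        * τ₂ (x + sh s1 + sh s2 + sh s3, y + sh t3 + sh t1)
        * τ₁ (x + sh s0, y + sh t0 + sh t2)
      + (t3 * (t3 - t0) / ((t3 - t1) * (t3 - t2)))
        * τ₂ (x + sh s1 + sh s2 + sh s3, y + sh t1 + sh t2)
        * τ₁ (x + sh s0, y + sh t0 + sh t3)

open Filter Topology

lemma continuous_sh : Continuous sh :=
  continuous_pi fun k => (continuous_pow (k+1)).div_const _

lemma sh_zero : sh 0 = 0 := by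
  funext k; simp [sh]

lemma useq_tendsto : Tendsto (fun n : ℕ => ((1 / (n+1) : ℝ) : ℂ)) atTop (𝓝 0) := by
  have h : Tendsto (fun n : ℕ => (1 / (n+1) : ℝ)) atTop (𝓝 0) :=
    tendsto_one_div_add_atTop_nhds_zero_nat
  have := (Complex.continuous_ofReal.tendsto 0).comp h
  simpa [Function.comp_def] using this

lemma fay_degenerate (τ₁ τ₂ : (ℕ → ℂ) × (ℕ → ℂ) → ℂ)
    (hc1 : Continuous τ₁) (hc2 : Continuous τ₂)
    (hFay : KPmKPFay τ₁ τ₂) (x Y : ℕ → ℂ) (a b c : ℂ)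
    (ha : a ≠ 0) (hb : b ≠ 0) (hc : c ≠ 0)
    (hab : a ≠ b) (hac : a ≠ c) (hbc : b ≠ c) :
    τ₁ (x, Y) * τ₂ (x, Y + sh a - sh b - sh c)
      = c * (c - a) / ((c - b) * c) * τ₂ (x, Y - sh c) * τ₁ (x, Y + sh a - sh b)
      + b * (b - a) / (b * (b - c)) * τ₂ (x, Y - sh b) * τ₁ (x, Y + sh a - sh c) := by
  set w : ℕ → ℂ := Y - sh b - sh c with hw
  set F : ℂ → ℂ := fun ε =>
      (-ε * (1 + ε) / (1 - ε)) * τ₁ (x + sh (ε^3) + sh ε, w + sh c + sh b + sh ε)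
        * τ₂ (x + sh (ε^4) + sh (ε^2), w + sh a)
    + (ε^3 / (1 - ε^2)) * τ₁ (x + sh ε + sh (ε^2), w + sh c + sh b + sh ε)
        * τ₂ (x + sh (ε^4) + sh (ε^3), w + sh a)
    + ((1 - ε^3) / ((1 - ε) * (1 - ε^2))) * τ₁ (x + sh (ε^2) + sh (ε^3), w + sh c + sh b + sh ε)
        * τ₂ (x + sh (ε^4) + sh ε, w + sh a) with hF
  set G : ℂ → ℂ := fun ε =>
      (c * (c - a) / ((c - b) * (c - ε))) * τ₂ (x + sh (ε^2) + sh (ε^3) + sh ε, w + sh b + sh ε)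
        * τ₁ (x + sh (ε^4), w + sh a + sh c)
    + (b * (b - a) / ((b - ε) * (b - c))) * τ₂ (x + sh (ε^2) + sh (ε^3) + sh ε, w + sh ε + sh c)
        * τ₁ (x + sh (ε^4), w + sh a + sh b)
    + (ε * (ε - a) / ((ε - c) * (ε - b))) * τ₂ (x + sh (ε^2) + sh (ε^3) + sh ε, w + sh c + sh b)
        * τ₁ (x + sh (ε^4), w + sh a + sh ε) with hG
  have heq : ∀ ε : ℂ, ε ≠ 0 → ‖ε‖ < 1 → ε ≠ a → ε ≠ b → ε ≠ c → F ε = G ε := by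
    intro ε h0 hn hea heb hec
    have hp : ∀ i j : ℕ, i < j → ε ^ j ≠ ε ^ i := by
      intro i j hij h
      have h2 : ε ^ i * ε ^ (j - i) = ε ^ i * 1 := by
        rw [mul_one, ← pow_add]
        rw [← h]; congr 1; omega
      have h3 := mul_left_cancel₀ (pow_ne_zero i h0) h2
      have h4 : ‖ε ^ (j - i)‖ < 1 := by
        rw [norm_pow]
        exact pow_lt_one₀ (norm_nonneg _) hn (by omega)
      rw [h3] at h4
      simp at h4
    have hp1 : ∀ j : ℕ, 1 < j → ε ^ j ≠ ε := by
      intro j hj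
      have := hp 1 j hj
      simpa using this
    have hε1 : (1 : ℂ) - ε ≠ 0 := by
      intro h
      have : ε = 1 := by linear_combination -h
      rw [this] at hn; simp at hn
    have hε1' : (1 : ℂ) + ε ≠ 0 := by
      intro h
      have : ε = -1 := by linear_combination h
      rw [this] at hn; simp at hn
    have hε2 : (1 : ℂ) - ε^2 ≠ 0 := by
      intro h
      have h' : ‖ε^2‖ < 1 := by
        rw [norm_pow]; exact pow_lt_one₀ (norm_nonneg _) hn (by norm_num)
      have : (ε^2 : ℂ) = 1 := by linear_combination -h
      rw [this] at h'; simp at h'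
    have d23 : ε^2 - ε^3 ≠ 0 := sub_ne_zero.mpr (hp 2 3 (by norm_num)).symm
    have d21 : ε^2 - ε ≠ 0 := sub_ne_zero.mpr (hp1 2 (by norm_num))
    have d31 : ε^3 - ε ≠ 0 := sub_ne_zero.mpr (hp1 3 (by norm_num))
    have d32 : ε^3 - ε^2 ≠ 0 := sub_ne_zero.mpr (hp 2 3 (by norm_num))
    have d12 : ε - ε^2 ≠ 0 := sub_ne_zero.mpr (hp1 2 (by norm_num)).symm
    have d13 : ε - ε^3 ≠ 0 := sub_ne_zero.mpr (hp1 3 (by norm_num)).symm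
    have key := hFay x w (ε^4) (ε^2) (ε^3) ε a c b ε
      (pow_ne_zero 4 h0) (pow_ne_zero 2 h0) (pow_ne_zero 3 h0) h0
      (hp 2 4 (by norm_num)) (hp 3 4 (by norm_num)) (hp1 4 (by norm_num))
      (hp 2 3 (by norm_num)).symm (hp1 2 (by norm_num)) (hp1 3 (by norm_num))
      ha hc hb h0 hac hab hea.symm hbc.symm hec.symm heb.symm
    have e1 : ε^2 * (ε^2 - ε^4) / ((ε^2 - ε^3) * (ε^2 - ε)) = -ε * (1 + ε) / (1 - ε) := by
      rw [div_eq_div_iff (mul_ne_zero d23 d21) hε1]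
      ring
    have e2 : ε^3 * (ε^3 - ε^4) / ((ε^3 - ε) * (ε^3 - ε^2)) = ε^3 / (1 - ε^2) := by
      rw [div_eq_div_iff (mul_ne_zero d31 d32) hε2]
      ring
    have e3 : ε * (ε - ε^4) / ((ε - ε^2) * (ε - ε^3)) = (1 - ε^3) / ((1 - ε) * (1 - ε^2)) := by
      field_simp
    rw [e1, e2, e3] at key
    simp only [hF, hG]
    exact key
  have hsh : ∀ m : ℕ, Continuous (fun ε : ℂ => sh (ε ^ m)) :=
    fun m => continuous_sh.comp (continuous_pow m)
  have hFc : ContinuousAt F 0 := by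
    rw [hF]
    have h1 : ContinuousAt (fun ε : ℂ => -ε * (1 + ε) / (1 - ε)) 0 :=
      ContinuousAt.div (by fun_prop) (by fun_prop) (by norm_num)
    have h2 : ContinuousAt (fun ε : ℂ => ε ^ 3 / (1 - ε ^ 2)) 0 :=
      ContinuousAt.div (by fun_prop) (by fun_prop) (by norm_num)
    have h3 : ContinuousAt (fun ε : ℂ => (1 - ε ^ 3) / ((1 - ε) * (1 - ε ^ 2))) 0 :=
      ContinuousAt.div (by fun_prop) (by fun_prop) (by norm_num)
    have ha1 : Continuous (fun ε : ℂ => τ₁ (x + sh (ε ^ 3) + sh ε, w + sh c + sh b + sh ε)) :=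
      hc1.comp (((continuous_const.add (hsh 3)).add continuous_sh).prodMk
        (continuous_const.add continuous_sh))
    have ha2 : Continuous (fun ε : ℂ => τ₁ (x + sh ε + sh (ε ^ 2), w + sh c + sh b + sh ε)) :=
      hc1.comp (((continuous_const.add continuous_sh).add (hsh 2)).prodMk
        (continuous_const.add continuous_sh))
    have ha3 : Continuous (fun ε : ℂ => τ₁ (x + sh (ε ^ 2) + sh (ε ^ 3), w + sh c + sh b + sh ε)) :=
      hc1.comp (((continuous_const.add (hsh 2)).add (hsh 3)).prodMk
        (continuous_const.add continuous_sh))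
    have hb1 : Continuous (fun ε : ℂ => τ₂ (x + sh (ε ^ 4) + sh (ε ^ 2), w + sh a)) :=
      hc2.comp (((continuous_const.add (hsh 4)).add (hsh 2)).prodMk continuous_const)
    have hb2 : Continuous (fun ε : ℂ => τ₂ (x + sh (ε ^ 4) + sh (ε ^ 3), w + sh a)) :=
      hc2.comp (((continuous_const.add (hsh 4)).add (hsh 3)).prodMk continuous_const)
    have hb3 : Continuous (fun ε : ℂ => τ₂ (x + sh (ε ^ 4) + sh ε, w + sh a)) :=
      hc2.comp (((continuous_const.add (hsh 4)).add continuous_sh).prodMk continuous_const)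
    exact (((h1.mul ha1.continuousAt).mul hb1.continuousAt).add
      ((h2.mul ha2.continuousAt).mul hb2.continuousAt)).add
      ((h3.mul ha3.continuousAt).mul hb3.continuousAt)
  have hGc : ContinuousAt G 0 := by
    rw [hG]
    have h1 : ContinuousAt (fun ε : ℂ => c * (c - a) / ((c - b) * (c - ε))) 0 :=
      ContinuousAt.div (by fun_prop) (by fun_prop)
        (by simpa using mul_ne_zero (sub_ne_zero.mpr (Ne.symm hbc)) hc)
    have h2 : ContinuousAt (fun ε : ℂ => b * (b - a) / ((b - ε) * (b - c))) 0 :=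
      ContinuousAt.div (by fun_prop) (by fun_prop)
        (by simpa using mul_ne_zero hb (sub_ne_zero.mpr hbc))
    have h3 : ContinuousAt (fun ε : ℂ => ε * (ε - a) / ((ε - c) * (ε - b))) 0 :=
      ContinuousAt.div (by fun_prop) (by fun_prop)
        (by simpa using mul_ne_zero (neg_ne_zero.mpr hc) (neg_ne_zero.mpr hb))
    have hxc : Continuous (fun ε : ℂ => x + sh (ε ^ 2) + sh (ε ^ 3) + sh ε) :=
      ((continuous_const.add (hsh 2)).add (hsh 3)).add continuous_sh
    have ha1 : Continuous (fun ε : ℂ => τ₂ (x + sh (ε ^ 2) + sh (ε ^ 3) + sh ε, w + sh b + sh ε)) :=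
      hc2.comp (hxc.prodMk (continuous_const.add continuous_sh))
    have ha2 : Continuous (fun ε : ℂ => τ₂ (x + sh (ε ^ 2) + sh (ε ^ 3) + sh ε, w + sh ε + sh c)) :=
      hc2.comp (hxc.prodMk ((continuous_const.add continuous_sh).add continuous_const))
    have ha3 : Continuous (fun ε : ℂ => τ₂ (x + sh (ε ^ 2) + sh (ε ^ 3) + sh ε, w + sh c + sh b)) :=
      hc2.comp (hxc.prodMk continuous_const)
    have hd1 : Continuous (fun ε : ℂ => τ₁ (x + sh (ε ^ 4), w + sh a + sh c)) :=
      hc1.comp ((continuous_const.add (hsh 4)).prodMk continuous_const)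
    have hd2 : Continuous (fun ε : ℂ => τ₁ (x + sh (ε ^ 4), w + sh a + sh b)) :=
      hc1.comp ((continuous_const.add (hsh 4)).prodMk continuous_const)
    have hd3 : Continuous (fun ε : ℂ => τ₁ (x + sh (ε ^ 4), w + sh a + sh ε)) :=
      hc1.comp ((continuous_const.add (hsh 4)).prodMk (continuous_const.add continuous_sh))
    exact (((h1.mul ha1.continuousAt).mul hd1.continuousAt).add
      ((h2.mul ha2.continuousAt).mul hd2.continuousAt)).add
      ((h3.mul ha3.continuousAt).mul hd3.continuousAt)
  set u : ℕ → ℂ := fun n => ((1 / (n + 1) : ℝ) : ℂ) with hu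
  have hut : Tendsto u atTop (𝓝 0) := useq_tendsto
  have hun : Tendsto (fun n => ‖u n‖) atTop (𝓝 0) := by
    simpa using hut.norm
  have hminpos : (0 : ℝ) < min 1 (min ‖a‖ (min ‖b‖ ‖c‖)) :=
    lt_min one_pos (lt_min (norm_pos_iff.mpr ha)
      (lt_min (norm_pos_iff.mpr hb) (norm_pos_iff.mpr hc)))
  have hev : ∀ᶠ n in atTop, F (u n) = G (u n) := by
    have hlt : ∀ᶠ n in atTop, ‖u n‖ < min 1 (min ‖a‖ (min ‖b‖ ‖c‖)) :=
      hun.eventually_lt_const hminpos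
    filter_upwards [hlt] with n hn
    have h0 : u n ≠ 0 := by
      rw [hu]
      exact Complex.ofReal_ne_zero.mpr (by positivity)
    refine heq _ h0 (hn.trans_le (min_le_left _ _)) ?_ ?_ ?_
    · exact fun h => absurd ((h ▸ hn).trans_le
        ((min_le_right _ _).trans (min_le_left _ _))) (lt_irrefl _)
    · exact fun h => absurd ((h ▸ hn).trans_le
        ((min_le_right _ _).trans ((min_le_right _ _).trans (min_le_left _ _)))) (lt_irrefl _)
    · exact fun h => absurd ((h ▸ hn).trans_le
        ((min_le_right _ _).trans ((min_le_right _ _).trans (min_le_right _ _)))) (lt_irrefl _)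
  have key0 : F 0 = G 0 := by
    have hFl : Tendsto (fun n => F (u n)) atTop (𝓝 (F 0)) := Filter.Tendsto.comp hFc hut
    have hGl : Tendsto (fun n => G (u n)) atTop (𝓝 (G 0)) := Filter.Tendsto.comp hGc hut
    exact tendsto_nhds_unique (hFl.congr' hev) hGl
  have hF0 : F 0 = τ₁ (x, w + sh c + sh b) * τ₂ (x, w + sh a) := by
    simp only [hF]
    norm_num [sh_zero]
  have hG0 : G 0 = c * (c - a) / ((c - b) * c) * τ₂ (x, w + sh b) * τ₁ (x, w + sh a + sh c)
      + b * (b - a) / (b * (b - c)) * τ₂ (x, w + sh c) * τ₁ (x, w + sh a + sh b) := by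
    simp only [hG]
    norm_num [sh_zero]
  rw [hF0, hG0] at key0
  rw [show w + sh c + sh b = Y by rw [hw]; abel,
      show w + sh a + sh c = Y + sh a - sh b by rw [hw]; abel,
      show w + sh a + sh b = Y + sh a - sh c by rw [hw]; abel,
      show w + sh a = Y + sh a - sh b - sh c by rw [hw]; abel,
      show w + sh b = Y - sh c by rw [hw]; abel,
      show w + sh c = Y - sh b by rw [hw]; abel] at key0
  exact key0

/-- Theorem 5.1, ASvM formula, case ν = μ = 2, tau form. -/
theorem asvm_nu_two_mu_two (τ₁ τ₂ : (ℕ → ℂ) × (ℕ → ℂ) → ℂ)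
    (hc1 : Continuous τ₁) (hc2 : Continuous τ₂)
    (hFay : KPmKPFay τ₁ τ₂) :
    ∀ x y : ℕ → ℂ, ∀ γ ζ z : ℂ,
      γ ≠ 0 → ζ ≠ 0 → z ≠ 0 → γ ≠ ζ → γ ≠ z → ζ ≠ z →
      ((z - ζ) / (z - γ)) * τ₂ (x, y + sh γ⁻¹ - sh ζ⁻¹ - sh z⁻¹) * τ₁ (x, y)
        - (ζ / γ) * τ₂ (x, y - sh z⁻¹) * τ₁ (x, y + sh γ⁻¹ - sh ζ⁻¹)
      = ((γ - ζ) / γ) * (z / (z - γ))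
          * τ₂ (x, y - sh ζ⁻¹) * τ₁ (x, y + sh γ⁻¹ - sh z⁻¹) := by
  intro x y γ ζ z hγ hζ hz hγζ hγz hζz
  have ha : γ⁻¹ ≠ 0 := inv_ne_zero hγ
  have hb : ζ⁻¹ ≠ 0 := inv_ne_zero hζ
  have hcc : z⁻¹ ≠ 0 := inv_ne_zero hz
  have hab : γ⁻¹ ≠ ζ⁻¹ := fun h => hγζ (inv_injective h)
  have hac : γ⁻¹ ≠ z⁻¹ := fun h => hγz (inv_injective h)
  have hbc : ζ⁻¹ ≠ z⁻¹ := fun h => hζz (inv_injective h)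
  have key := fay_degenerate τ₁ τ₂ hc1 hc2 hFay x y γ⁻¹ ζ⁻¹ z⁻¹ ha hb hcc hab hac hbc
  have hzγ : z - γ ≠ 0 := sub_ne_zero.mpr (Ne.symm hγz)
  have hib : z⁻¹ - ζ⁻¹ ≠ 0 := sub_ne_zero.mpr hbc.symm
  have hzb : ζ⁻¹ - z⁻¹ ≠ 0 := sub_ne_zero.mpr hbc
  have hζz' : ζ - z ≠ 0 := sub_ne_zero.mpr hζz
  have hzζ' : z - ζ ≠ 0 := sub_ne_zero.mpr (Ne.symm hζz)
  have k1eq : z⁻¹ * (z⁻¹ - γ⁻¹) / ((z⁻¹ - ζ⁻¹) * z⁻¹) = ζ * (γ - z) / (γ * (ζ - z)) := by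
    rw [inv_sub_inv hz hγ, inv_sub_inv hz hζ]
    field_simp
  have k2eq : ζ⁻¹ * (ζ⁻¹ - γ⁻¹) / (ζ⁻¹ * (ζ⁻¹ - z⁻¹)) = z * (γ - ζ) / (γ * (z - ζ)) := by
    rw [inv_sub_inv hζ hγ, inv_sub_inv hζ hz]
    field_simp
  rw [k1eq, k2eq] at key
  have hk1 : (z - ζ) / (z - γ) * (ζ * (γ - z) / (γ * (ζ - z))) = ζ / γ := by
    field_simp
    ring
  have hk2 : (z - ζ) / (z - γ) * (z * (γ - ζ) / (γ * (z - ζ)))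
      = (γ - ζ) / γ * (z / (z - γ)) := by
    field_simp
  linear_combination (z - ζ) / (z - γ) * key
    + (τ₂ (x, y - sh z⁻¹) * τ₁ (x, y + sh γ⁻¹ - sh ζ⁻¹)) * hk1
    + (τ₂ (x, y - sh ζ⁻¹) * τ₁ (x, y + sh γ⁻¹ - sh z⁻¹)) * hk2
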